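/- arXiv:2006.05600 — 5 statements merged into one kernel-verified Lean document; each statement's English description precedes it below -/
import Mathlib

section
/- Let S = (N, M0) be a Petri net system fulfilling property R (i.e. both S and its reverse −S are reversible). Then S is bounded if and only if −S is bounded. -/
open scoped Classical

structure PetriNet (P T : Type) where
  pre : P → T → ℕ
  post : T → P → ℕ

namespace PetriNet

variable {P T : Type}

def enabled (N : PetriNet P T) (M : P → ℕ) (t : T) : Prop :=
  ∀ p, N.pre p t ≤ M p

def fire (N : PetriNet P T) (M : P → ℕ) (t : T) : P → ℕ :=
  fun p => M p - N.pre p t + N.post t p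

def feasible (N : PetriNet P T) : (P → ℕ) → List T → (P → ℕ) → Prop
  | M, [], M' => M' = M
  | M, t :: σ, M' => N.enabled M t ∧ feasible N (N.fire M t) σ M'

def reachable (N : PetriNet P T) (M0 M : P → ℕ) : Prop :=
  ∃ σ : List T, N.feasible M0 σ M

def inc (N : PetriNet P T) (p : P) (t : T) : ℤ :=
  (N.post t p : ℤ) - (N.pre p t : ℤ)

def potReach [Fintype T] (N : PetriNet P T) (M0 M : P → ℕ) : Prop :=
  ∃ Y : T → ℕ, ∀ p, (M p : ℤ) = (M0 p : ℤ) + ∑ t, N.inc p t * (Y t : ℤ)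

def live (N : PetriNet P T) (M0 : P → ℕ) : Prop :=
  ∀ (t : T) (M : P → ℕ), N.reachable M0 M →
    ∃ M', N.reachable M M' ∧ N.enabled M' t

def bounded (N : PetriNet P T) (M0 : P → ℕ) : Prop :=
  ∃ k : ℕ, ∀ M : P → ℕ, N.reachable M0 M → ∀ p, M p ≤ k

def reversible (N : PetriNet P T) (M0 : P → ℕ) : Prop :=
  ∀ M : P → ℕ, N.reachable M0 M → N.reachable M M0

def rev (N : PetriNet P T) : PetriNet P T :=
  ⟨fun p t => N.post t p, fun t p => N.pre p t⟩

def propR (N : PetriNet P T) (M0 : P → ℕ) : Prop :=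
  N.reversible M0 ∧ N.rev.reversible M0

def placePre [Fintype T] (N : PetriNet P T) (p : P) : Finset T :=
  Finset.univ.filter fun t => 0 < N.post t p

def placePost [Fintype T] (N : PetriNet P T) (p : P) : Finset T :=
  Finset.univ.filter fun t => 0 < N.pre p t

def transPre [Fintype P] (N : PetriNet P T) (t : T) : Finset P :=
  Finset.univ.filter fun p => 0 < N.pre p t

def transPost [Fintype P] (N : PetriNet P T) (t : T) : Finset P :=
  Finset.univ.filter fun p => 0 < N.post t p

def arc (N : PetriNet P T) : (P ⊕ T) → (P ⊕ T) → Prop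
  | Sum.inl p, Sum.inr t => 0 < N.pre p t
  | Sum.inr t, Sum.inl p => 0 < N.post t p
  | _, _ => False

def stronglyConnected (N : PetriNet P T) : Prop :=
  ∀ x y : P ⊕ T, Relation.ReflTransGen N.arc x y

def connectedNet (N : PetriNet P T) : Prop :=
  ∀ x y : P ⊕ T, Relation.ReflTransGen (fun a b => N.arc a b ∨ N.arc b a) x y

def ordinary (N : PetriNet P T) : Prop :=
  ∀ p t, N.pre p t ≤ 1 ∧ N.post t p ≤ 1

def isWMGle [Fintype T] (N : PetriNet P T) : Prop :=
  ∀ p, (N.placePre p).card ≤ 1 ∧ (N.placePost p).card ≤ 1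

def deadlock (N : PetriNet P T) (M : P → ℕ) : Prop :=
  ∀ t, ¬ N.enabled M t

end PetriNet



lemma PetriNet.rev_rev {P T : Type} (N : PetriNet P T) : N.rev.rev = N := rfl

lemma PetriNet.reachable_rev {P T : Type} (N : PetriNet P T) {M M' : P → ℕ}
    (h : N.reachable M M') : N.rev.reachable M' M := by
  obtain ⟨σ, hσ⟩ := h
  induction σ generalizing M with
  | nil => exact ⟨[], hσ.symm⟩
  | cons t σ ih =>
    obtain ⟨hen, hf⟩ := hσ
    obtain ⟨τ, hτ⟩ := ih (M := N.fire M t) hf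
    refine ⟨τ ++ [t], ?_⟩
    have key : ∀ (L : List T) (A B : P → ℕ), N.rev.feasible A L B →
        N.rev.enabled B t → N.rev.feasible A (L ++ [t]) (N.rev.fire B t) := by
      intro L
      induction L with
      | nil => intro A B hAB he; subst hAB; exact ⟨he, rfl⟩
      | cons s L ihL => intro A B hAB he; exact ⟨hAB.1, ihL _ _ hAB.2 he⟩
    have hen' : N.rev.enabled (N.fire M t) t := by
      intro p
      have := hen p
      simp only [PetriNet.rev, PetriNet.fire]
      omega
    have hfire : N.rev.fire (N.fire M t) t = M := by
      funext p
      have := hen p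
      simp [PetriNet.rev, PetriNet.fire]
      omega
    have := key τ M' (N.fire M t) hτ hen'
    rwa [hfire] at this

/-- If both `S` and its reverse `-S` are reversible (property R),
then `S` is bounded iff `-S` is bounded. -/
theorem stmt0 {P T : Type} [Fintype P] [Fintype T]
    (N : PetriNet P T) (M0 : P → ℕ) (hR : N.propR M0) :
    N.bounded M0 ↔ N.rev.bounded M0 := by
  obtain ⟨h1, h2⟩ := hR
  constructor
  · rintro ⟨k, hk⟩
    refine ⟨k, fun M hM p => ?_⟩
    have : N.rev.reachable M M0 := h2 M hM
    have : N.rev.rev.reachable M0 M := N.rev.reachable_rev this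
    rw [N.rev_rev] at this
    exact hk M this p
  · rintro ⟨k, hk⟩
    refine ⟨k, fun M hM p => ?_⟩
    have : N.reachable M M0 := h1 M hM
    exact hk M (N.reachable_rev this) p
end

section
/- Let S = (N, M0) be a Petri net system such that for every potentially reachable marking M ∈ PR(S), the system (N, M) is live and reversible. Then the reverse system −S is live and reversible. -/
open scoped Classical

/-!
Reversing a firing sequence of `N` gives a firing sequence of `−N` in the opposite direction,
so it suffices to show that every marking reachable in `−S` is live and reversible in `N`.
For this, `PR(S)` is shown to be closed under firing transitions of `−N`. At a marking `A ∈ PR(S)`,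
liveness and reversibility of `(N, A)` give a cycle `A →σ B →t B' →τ A` of `N`; by the state
equation, firing `t` backwards at `A` has the same effect on the marking as firing `σ τ` forwards,
so `A − I(·, t) = M0 + I·(Y + #σ + #τ)` stays potentially reachable.
-/

namespace PetriNet

variable {P T : Type} {N : PetriNet P T}

theorem feasible_append {A B C : P → ℕ} {σ τ : List T}
    (hσ : N.feasible A σ B) (hτ : N.feasible B τ C) : N.feasible A (σ ++ τ) C := by
  induction σ generalizing A with
  | nil => cases hσ; exact hτ
  | cons t σ ih => exact ⟨hσ.1, ih hσ.2⟩

theorem reachable_refl (M : P → ℕ) : N.reachable M M := ⟨[], rfl⟩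

theorem reachable_trans {A B C : P → ℕ} (hAB : N.reachable A B) (hBC : N.reachable B C) :
    N.reachable A C :=
  let ⟨σ, hσ⟩ := hAB
  let ⟨τ, hτ⟩ := hBC
  ⟨σ ++ τ, feasible_append hσ hτ⟩

theorem feasible_singleton {M : P → ℕ} {t : T} (h : N.enabled M t) :
    N.feasible M [t] (N.fire M t) :=
  ⟨h, rfl⟩

theorem reachable_fire {M : P → ℕ} {t : T} (h : N.enabled M t) : N.reachable M (N.fire M t) :=
  ⟨[t], feasible_singleton h⟩

theorem enabled_rev_fire (N : PetriNet P T) (M : P → ℕ) (t : T) : N.rev.enabled (N.fire M t) t := by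
  intro p
  simp only [rev, fire]
  omega

theorem rev_fire_fire {M : P → ℕ} {t : T} (h : N.enabled M t) :
    N.rev.fire (N.fire M t) t = M := by
  funext p
  have := h p
  simp only [rev, fire]
  omega

theorem feasible.rev {A B : P → ℕ} {σ : List T} (h : N.feasible A σ B) :
    N.rev.feasible B σ.reverse A := by
  induction σ generalizing A with
  | nil => exact h.symm
  | cons t σ ih =>
    have hstep := feasible_singleton (N.enabled_rev_fire A t)
    rw [rev_fire_fire h.1] at hstep
    simpa using feasible_append (ih h.2) hstep

theorem reachable_rev_iff {A B : P → ℕ} : N.rev.reachable A B ↔ N.reachable B A :=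
  ⟨fun ⟨σ, hσ⟩ => ⟨σ.reverse, hσ.rev⟩, fun ⟨σ, hσ⟩ => ⟨σ.reverse, hσ.rev⟩⟩

theorem cast_fire {M : P → ℕ} {t : T} (h : N.enabled M t) (p : P) :
    (N.fire M t p : ℤ) = M p + N.inc p t := by
  have := h p
  simp only [fire, inc]
  omega

theorem feasible.state_equation [Fintype T] {A B : P → ℕ} {σ : List T}
    (h : N.feasible A σ B) (p : P) :
    (B p : ℤ) = A p + ∑ s, N.inc p s * σ.count s := by
  induction σ generalizing A with
  | nil => cases h; simp
  | cons t σ ih =>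
    have hcount : ∀ s, ((t :: σ).count s : ℤ) = σ.count s + if s = t then 1 else 0 := by
      intro s
      rcases eq_or_ne s t with rfl | hst
      · simp
      · simp [hst, Ne.symm hst]
    simp only [hcount, mul_add, mul_ite, mul_one, mul_zero, Finset.sum_add_distrib,
      Finset.sum_ite_eq', Finset.mem_univ, if_true, ih h.2, cast_fire h.1]
    ring

theorem exists_enabled_and_return {M : P → ℕ} (hl : N.live M) (hr : N.reversible M) (t : T) :
    ∃ B, N.reachable M B ∧ N.enabled B t ∧ N.reachable (N.fire B t) M := by
  obtain ⟨B, hMB, hB⟩ := hl t M (reachable_refl M)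
  exact ⟨B, hMB, hB, hr _ (reachable_trans hMB (reachable_fire hB))⟩

theorem potReach_refl [Fintype T] (M0 : P → ℕ) : N.potReach M0 M0 :=
  ⟨0, by simp⟩

theorem potReach_rev_fire [Fintype T] {M0 A B : P → ℕ} {t : T} (hA : N.potReach M0 A)
    (hAB : N.reachable A B) (hB : N.enabled B t) (hBA : N.reachable (N.fire B t) A)
    (hA_rev : N.rev.enabled A t) : N.potReach M0 (N.rev.fire A t) := by
  obtain ⟨Y, hY⟩ := hA
  obtain ⟨σ, hσ⟩ := hAB
  obtain ⟨τ, hτ⟩ := hBA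
  refine ⟨fun s => Y s + σ.count s + τ.count s, fun p => ?_⟩
  have hrev : (N.rev.fire A t p : ℤ) = A p - N.inc p t := by
    have := hA_rev p
    simp only [rev, fire, inc] at this ⊢
    omega
  have hthere := hσ.state_equation p
  have hback := hτ.state_equation p
  have hfire := cast_fire hB p
  simp only [Nat.cast_add, mul_add, Finset.sum_add_distrib]
  linarith [hY p]

theorem potReach_of_rev_feasible [Fintype T] {M0 A B : P → ℕ} {σ : List T}
    (h : ∀ M, N.potReach M0 M → N.live M ∧ N.reversible M)
    (hA : N.potReach M0 A) (hσ : N.rev.feasible A σ B) : N.potReach M0 B := by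
  induction σ generalizing A with
  | nil => cases hσ; exact hA
  | cons t σ ih =>
    obtain ⟨C, hAC, hC, hCA⟩ := exists_enabled_and_return (h A hA).1 (h A hA).2 t
    exact ih (potReach_rev_fire hA hAC hC hCA hσ.1) hσ.2

end PetriNet

open PetriNet in
theorem stmt1_general {P T : Type} [Fintype T]
    (N : PetriNet P T) (M0 : P → ℕ)
    (h : ∀ M : P → ℕ, N.potReach M0 M → N.live M ∧ N.reversible M) :
    N.rev.live M0 ∧ N.rev.reversible M0 := by
  have hPR : ∀ M, N.rev.reachable M0 M → N.live M ∧ N.reversible M := fun M ⟨σ, hσ⟩ =>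
    h M (potReach_of_rev_feasible h (potReach_refl M0) hσ)
  refine ⟨fun t M hM => ?_, fun M hM => ?_⟩
  · obtain ⟨B, -, hB, hBM⟩ := exists_enabled_and_return (hPR M hM).1 (hPR M hM).2 t
    exact ⟨N.fire B t, reachable_rev_iff.2 hBM, N.enabled_rev_fire B t⟩
  · exact reachable_rev_iff.2 ((hPR M hM).2 M0 (reachable_rev_iff.1 hM))

/-- If every potentially reachable marking of `S` is live and reversible,
then the reverse system `-S` is live and reversible. -/
theorem stmt1 {P T : Type} [Fintype P] [Fintype T]
    (N : PetriNet P T) (M0 : P → ℕ)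
    (h : ∀ M : P → ℕ, N.potReach M0 M → N.live M ∧ N.reversible M) :
    N.rev.live M0 ∧ N.rev.reversible M0 :=
  stmt1_general N M0 h
end

section
/- Let S = (N, M0) be a Petri net system satisfying property R (both S and its reverse −S are reversible) and such that PRG(S) is initially directed. Then R(S) = PR(S), i.e. every potentially reachable marking of S is reachable. -/
open scoped Classical

namespace PetriNet

variable {P T : Type}

lemma feasible_append_s2 (N : PetriNet P T) {M M' M'' : P → ℕ} {σ τ : List T}
    (h1 : N.feasible M σ M') (h2 : N.feasible M' τ M'') :
    N.feasible M (σ ++ τ) M'' := by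
  induction σ generalizing M with
  | nil => cases h1; exact h2
  | cons t σ ih => exact ⟨h1.1, ih h1.2⟩

lemma reachable_trans_s2 (N : PetriNet P T) {M M' M'' : P → ℕ}
    (h1 : N.reachable M M') (h2 : N.reachable M' M'') : N.reachable M M'' := by
  obtain ⟨σ, h1⟩ := h1; obtain ⟨τ, h2⟩ := h2
  exact ⟨σ ++ τ, feasible_append_s2 N h1 h2⟩

lemma feasible_rev (N : PetriNet P T) {M M' : P → ℕ} {σ : List T}
    (h : N.feasible M σ M') : N.rev.feasible M' σ.reverse M := by
  induction σ generalizing M with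
  | nil => cases h; rfl
  | cons t σ ih =>
      obtain ⟨he, hf⟩ := h
      have hrest := ih hf
      simp only [List.reverse_cons]
      refine feasible_append_s2 _ hrest ?_
      refine ⟨fun p => ?_, ?_⟩
      · have := he p
        simp only [rev, fire]
        omega
      · funext p
        have := he p
        simp only [rev, fire]
        omega

lemma reachable_rev_s2 (N : PetriNet P T) {M M' : P → ℕ}
    (h : N.reachable M M') : N.rev.reachable M' M := by
  obtain ⟨σ, h⟩ := h; exact ⟨σ.reverse, feasible_rev N h⟩

lemma rev_rev_s2 (N : PetriNet P T) : N.rev.rev = N := rfl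

lemma feasible_count [Fintype T] (N : PetriNet P T) {M0 M : P → ℕ} {σ : List T}
    (h : N.feasible M0 σ M) :
    ∀ p, (M p : ℤ) = (M0 p : ℤ) + ∑ t, N.inc p t * (σ.count t : ℤ) := by
  induction σ generalizing M0 with
  | nil => cases h; simp
  | cons t σ ih =>
      obtain ⟨he, hf⟩ := h
      intro p
      have hIH := ih hf p
      have hfire : ((N.fire M0 t p : ℕ) : ℤ) = (M0 p : ℤ) + N.inc p t := by
        have := he p
        simp only [fire, inc]
        push_cast [this]
        ring
      have hcount : ∀ s : T, ((List.count s (t :: σ) : ℕ) : ℤ)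
          = (σ.count s : ℤ) + (if t = s then 1 else 0) := by
        intro s
        rw [List.count_cons]
        split <;> simp_all
      calc (M p : ℤ) = (N.fire M0 t p : ℤ) + ∑ s, N.inc p s * (σ.count s : ℤ) := hIH
        _ = (M0 p : ℤ) + (∑ s, N.inc p s * (σ.count s : ℤ) + N.inc p t) := by
            rw [hfire]; ring
        _ = (M0 p : ℤ) + ∑ s, N.inc p s * ((t :: σ).count s : ℤ) := by
            congr 1
            simp only [hcount, mul_add]
            rw [Finset.sum_add_distrib]
            congr 1
            simp [mul_ite, Finset.sum_ite_eq]

end PetriNet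



/-- If `S` satisfies property R and `PRG(S)` is initially directed, then `R(S) = PR(S)`. -/
theorem stmt2 {P T : Type} [Fintype P] [Fintype T]
    (N : PetriNet P T) (M0 : P → ℕ)
    (hR : N.propR M0)
    (hdir : ∀ M1 : P → ℕ, N.potReach M0 M1 →
      ∃ M : P → ℕ, N.reachable M0 M ∧ N.reachable M1 M) :
    ∀ M : P → ℕ, N.reachable M0 M ↔ N.potReach M0 M := by
  intro M
  constructor
  · rintro ⟨σ, hσ⟩
    exact ⟨fun t => σ.count t, PetriNet.feasible_count N hσ⟩
  · intro hpot
    obtain ⟨Mx, hx0, hx1⟩ := hdir M hpot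
    -- M0 → Mx, M → Mx in N
    have h1 : N.reachable Mx M0 := hR.1 Mx hx0
    -- M0 → Mx in rev N
    have h2 : N.rev.reachable M0 Mx := PetriNet.reachable_rev_s2 N h1
    -- Mx → M in rev N
    have h3 : N.rev.reachable Mx M := PetriNet.reachable_rev_s2 N hx1
    have h4 : N.rev.reachable M0 M := PetriNet.reachable_trans_s2 _ h2 h3
    have h5 : N.rev.reachable M M0 := hR.2 M h4
    have h6 : N.rev.rev.reachable M0 M := PetriNet.reachable_rev_s2 N.rev h5
    rwa [PetriNet.rev_rev_s2] at h6
end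

section
/- Every live WMG≤ system fulfills the PR-R equality: if S = (N, M0) is live and N is a WMG≤, then R(S) = PR(S). -/
open scoped Classical

section Aux

variable {P T : Type}

/-- Parikh count of a transition in a sequence. -/
noncomputable def parikh (σ : List T) (t : T) : ℕ :=
  (σ.filter (fun s => s = t)).length

lemma parikh_nil (t : T) : parikh ([] : List T) t = 0 := rfl

lemma parikh_cons (s : T) (σ : List T) (t : T) :
    parikh (s :: σ) t = (if s = t then 1 else 0) + parikh σ t := by
  simp only [parikh, List.filter_cons]
  by_cases h : s = t <;> simp [h] <;> omega

/-- Forward direction: any feasible sequence satisfies the state equation. -/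
lemma feasible_state_eq [Fintype T] (N : PetriNet P T) :
    ∀ (σ : List T) (M0 M : P → ℕ), N.feasible M0 σ M →
      ∀ p, (M p : ℤ) = (M0 p : ℤ) + ∑ t, N.inc p t * (parikh σ t : ℤ) := by
  intro σ
  induction σ with
  | nil =>
    intro M0 M h p
    have : M = M0 := h
    subst this
    simp [parikh_nil]
  | cons s σ ih =>
    intro M0 M h p
    obtain ⟨hen, hfe⟩ := h
    have h1 := ih (N.fire M0 s) M hfe p
    have hens := hen p
    have hfire : (N.fire M0 s p : ℤ) = (M0 p : ℤ) + N.inc p s := by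
      simp only [PetriNet.fire, PetriNet.inc]
      push_cast [Nat.cast_sub hens]
      ring
    have hsum : ∑ t, N.inc p t * (parikh (s :: σ) t : ℤ)
        = N.inc p s + ∑ t, N.inc p t * (parikh σ t : ℤ) := by
      have : ∀ t, N.inc p t * (parikh (s :: σ) t : ℤ)
          = N.inc p t * (if s = t then 1 else 0) + N.inc p t * (parikh σ t : ℤ) := by
        intro t
        rw [parikh_cons]
        push_cast
        ring
      rw [Finset.sum_congr rfl (fun t _ => this t), Finset.sum_add_distrib]
      congr 1
      rw [Finset.sum_eq_single_of_mem s (Finset.mem_univ s)]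
      · simp
      · intro b _ hb
        simp [Ne.symm hb]
    rw [h1, hfire, hsum]
    ring

lemma feasible_append (N : PetriNet P T) :
    ∀ (σ1 : List T) (M0 M1 M2 : P → ℕ), N.feasible M0 σ1 M1 →
      ∀ σ2, N.feasible M1 σ2 M2 → N.feasible M0 (σ1 ++ σ2) M2 := by
  intro σ1
  induction σ1 with
  | nil =>
    intro M0 M1 M2 h σ2 h2
    have : M1 = M0 := h
    subst this
    exact h2
  | cons s σ ih =>
    intro M0 M1 M2 h σ2 h2
    exact ⟨h.1, ih _ _ _ h.2 _ h2⟩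

/-- Key enabling lemma: in a live WMG≤, if the state equation has a solution Y with
nonempty support, then some transition in the support of Y is enabled at M0. -/
lemma wmg_enabling [Fintype P] [Fintype T] (N : PetriNet P T) (hwmg : N.isWMGle)
    (M0 : P → ℕ) (hlive : N.live M0) (Y : T → ℕ) (M : P → ℕ)
    (hY : ∀ p, (M p : ℤ) = (M0 p : ℤ) + ∑ t, N.inc p t * (Y t : ℤ))
    (t0 : T) (ht0 : 0 < Y t0) :
    ∃ t, 0 < Y t ∧ N.enabled M0 t := by
  by_contra hcon
  push_neg at hcon
  -- For each t in supp(Y), there is a disabling place whose only token supplier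
  -- is also in supp(Y), and whose only consumer is t itself.
  have hQ : ∀ t, 0 < Y t → ∃ p : P, M0 p < N.pre p t ∧
      (∀ s, 0 < N.post s p → 0 < Y s) ∧ (∀ s, 0 < N.pre p s → s = t) := by
    intro t ht
    have hne := hcon t ht
    have : ∃ p, M0 p < N.pre p t := by
      by_contra h
      push_neg at h
      exact hne (fun p => h p)
    obtain ⟨p, hp⟩ := this
    refine ⟨p, hp, ?_, ?_⟩
    · -- unique token supplier exists and is in supp(Y)
      have huniqout : ∀ s, 0 < N.pre p s → s = t := by
        intro s hs
        have hcard := (hwmg p).2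
        have hsm : s ∈ N.placePost p := by
          simp [PetriNet.placePost, hs]
        have htm : t ∈ N.placePost p := by
          simp [PetriNet.placePost]
          omega
        exact Finset.card_le_one.mp hcard s hsm t htm
      have hex : ∃ s, 0 < N.post s p ∧ 0 < Y s := by
        by_contra hno
        push_neg at hno
        -- then the sum at p is -pre p t * Y t, making M p negative
        have hsum : ∑ s, N.inc p s * (Y s : ℤ) = -(N.pre p t : ℤ) * (Y t : ℤ) := by
          rw [Finset.sum_eq_single_of_mem t (Finset.mem_univ t)]
          · have hpost : N.post t p = 0 := by
              by_contra h
              have := hno t (by omega)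
              omega
            simp [PetriNet.inc, hpost]
          · intro b _ hb
            have hpre : N.pre p b = 0 := by
              by_contra h
              exact hb (huniqout b (by omega))
            rcases Nat.eq_zero_or_pos (N.post b p) with h | h
            · simp [PetriNet.inc, hpre, h]
            · have hb0 : Y b = 0 := by have := hno b h; omega
              simp [PetriNet.inc, hpre, hb0]
        have hMp := hY p
        rw [hsum] at hMp
        have h1 : (N.pre p t : ℤ) * (Y t : ℤ) ≥ (N.pre p t : ℤ) := by
          have : (1 : ℤ) ≤ (Y t : ℤ) := by exact_mod_cast ht
          nlinarith [Int.ofNat_nonneg (N.pre p t)]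
        have h2 : (0 : ℤ) ≤ (M p : ℤ) := Int.ofNat_nonneg _
        have h3 : (M0 p : ℤ) < (N.pre p t : ℤ) := by exact_mod_cast hp
        linarith [hMp, h1, h2, h3]
      obtain ⟨s, hs1, hs2⟩ := hex
      intro s' hs'
      have hcard := (hwmg p).1
      have : s' = s := by
        have h1 : s' ∈ N.placePre p := by simp [PetriNet.placePre, hs']
        have h2 : s ∈ N.placePre p := by simp [PetriNet.placePre, hs1]
        exact Finset.card_le_one.mp hcard s' h1 s h2
      exact this ▸ hs2
    · intro s hs
      have hcard := (hwmg p).2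
      have h1 : s ∈ N.placePost p := by simp [PetriNet.placePost, hs]
      have h2 : t ∈ N.placePost p := by
        simp [PetriNet.placePost]
        omega
      exact Finset.card_le_one.mp hcard s h1 t h2
  choose pl hpl1 hpl2 hpl3 using hQ
  -- Along any feasible run from M0, the disabling places keep their markings,
  -- hence no transition in supp(Y) is ever enabled.
  have key : ∀ (σ : List T) (M1 Mend : P → ℕ), N.feasible M1 σ Mend →
      (∀ t (ht : 0 < Y t), M1 (pl t ht) = M0 (pl t ht)) →
      (∀ t (ht : 0 < Y t), Mend (pl t ht) = M0 (pl t ht)) := by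
    intro σ
    induction σ with
    | nil =>
      intro M1 Mend hfe hM
      have : Mend = M1 := hfe
      subst this
      exact hM
    | cons s σ ih =>
      intro M1 Mend hfe hM
      obtain ⟨hen, hfe'⟩ := hfe
      have hs : ¬ 0 < Y s := by
        intro hsY
        have h1 := hM s hsY
        have h2 := hpl1 s hsY
        have h3 := hen (pl s hsY)
        omega
      apply ih (N.fire M1 s) Mend hfe'
      intro t ht
      have h1 : N.post s (pl t ht) = 0 := by
        by_contra h
        exact hs (hpl2 t ht s (by omega))
      have h2 : N.pre (pl t ht) s = 0 := by
        by_contra h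
        have : s = t := hpl3 t ht s (by omega)
        subst this
        exact hs ht
      simp [PetriNet.fire, h1, h2, hM t ht]
  -- liveness of t0 contradicts this
  obtain ⟨M', hr, hen⟩ := hlive t0 M0 ⟨[], rfl⟩
  obtain ⟨σ, hσ⟩ := hr
  have hfix := key σ M0 M' hσ (fun _ _ => rfl) t0 ht0
  have h1 := hen (pl t0 ht0)
  have h2 := hpl1 t0 ht0
  omega

/-- Backward direction, by strong induction on the total firing count. -/
lemma pr_to_r [Fintype P] [Fintype T] (N : PetriNet P T) (hwmg : N.isWMGle) :
    ∀ (n : ℕ) (Y : T → ℕ) (M0 M : P → ℕ), (∑ t, Y t) = n → N.live M0 →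
      (∀ p, (M p : ℤ) = (M0 p : ℤ) + ∑ t, N.inc p t * (Y t : ℤ)) →
      N.reachable M0 M := by
  intro n
  induction n using Nat.strong_induction_on with
  | _ n ih =>
    intro Y M0 M hsum hlive hM
    rcases Nat.eq_zero_or_pos n with h0 | hpos
    · subst h0
      have hY0 : ∀ t, Y t = 0 := by
        intro t
        have := Finset.sum_eq_zero_iff.mp hsum t (Finset.mem_univ t)
        exact this
      have hMM : M = M0 := by
        funext p
        have := hM p
        simp [hY0] at this
        exact_mod_cast this
      exact ⟨[], hMM⟩
    · have hex : ∃ t, 0 < Y t := by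
        by_contra h
        push_neg at h
        have : ∑ t, Y t = 0 := Finset.sum_eq_zero (fun t _ => by have := h t; omega)
        omega
      obtain ⟨t0, ht0⟩ := hex
      obtain ⟨t, htY, hten⟩ := wmg_enabling N hwmg M0 hlive Y M hM t0 ht0
      set M1 := N.fire M0 t with hM1
      have hreach1 : N.reachable M0 M1 := ⟨[t], hten, rfl⟩
      have hlive1 : N.live M1 := by
        intro t' M' hr
        obtain ⟨σ, hσ⟩ := hr
        exact hlive t' M' ⟨t :: σ, hten, hσ⟩
      set Y' := Function.update Y t (Y t - 1) with hY'
      have hYt' : Y' t = Y t - 1 := by simp [hY']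
      have hYo : ∀ s, s ≠ t → Y' s = Y s := by
        intro s hst
        simp [hY', Function.update_of_ne hst]
      have hsum' : ∑ s, Y' s = n - 1 := by
        have h1 : ∑ s, Y' s = ∑ s ∈ Finset.univ.erase t, Y' s + Y' t :=
          (Finset.sum_erase_add _ _ (Finset.mem_univ t)).symm
        have h2 : ∑ s, Y s = ∑ s ∈ Finset.univ.erase t, Y s + Y t :=
          (Finset.sum_erase_add _ _ (Finset.mem_univ t)).symm
        have h3 : ∑ s ∈ Finset.univ.erase t, Y' s = ∑ s ∈ Finset.univ.erase t, Y s :=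
          Finset.sum_congr rfl (fun s hs => hYo s (Finset.ne_of_mem_erase hs))
        omega
      have hM1t : ∀ p, (M1 p : ℤ) = (M0 p : ℤ) + N.inc p t := by
        intro p
        have hens := hten p
        simp only [hM1, PetriNet.fire, PetriNet.inc]
        push_cast [Nat.cast_sub hens]
        ring
      have hM' : ∀ p, (M p : ℤ) = (M1 p : ℤ) + ∑ s, N.inc p s * (Y' s : ℤ) := by
        intro p
        have e1 : ∑ s, (N.inc p s * (Y s : ℤ) - N.inc p s * (Y' s : ℤ)) = N.inc p t := by
          rw [Finset.sum_eq_single_of_mem t (Finset.mem_univ t)]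
          · have : (Y' t : ℤ) = (Y t : ℤ) - 1 := by
              rw [hYt']
              have : 1 ≤ Y t := htY
              push_cast [Nat.cast_sub this]
              ring
            rw [this]
            ring
          · intro b _ hb
            rw [hYo b hb]
            ring
        rw [Finset.sum_sub_distrib] at e1
        have := hM p
        have h2 := hM1t p
        omega
      obtain ⟨σ, hσ⟩ := ih (n - 1) (by omega) Y' M1 M hsum' hlive1 hM'
      exact ⟨t :: σ, hten, hσ⟩

end Aux

/-- Every live WMG≤ system fulfills the PR-R equality. -/
theorem stmt4 {P T : Type} [Fintype P] [Fintype T]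
    (N : PetriNet P T) (M0 : P → ℕ)
    (hwmg : N.isWMGle) (hlive : N.live M0) :
    ∀ M : P → ℕ, N.reachable M0 M ↔ N.potReach M0 M := by
  intro M
  constructor
  · rintro ⟨σ, hσ⟩
    exact ⟨fun t => parikh σ t, feasible_state_eq N σ M0 M hσ⟩
  · rintro ⟨Y, hY⟩
    exact pr_to_r N hwmg (∑ t, Y t) Y M0 M rfl hlive hY
end

section
/- If an augmented marked graph S is strongly live (i.e. (N,M) is live for every potentially reachable marking M ∈ PR(S)), then PRG(S) is directed: for all M1, M2 ∈ PR(S), R((N,M1)) ∩ R((N,M2)) ≠ ∅. -/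
open scoped Classical

namespace PetriNet

variable {Q T : Type}

/-- The net obtained by removing the places of `R` together with their adjacent arcs. -/
def delPlaces (N : PetriNet Q T) (R : Finset Q) : PetriNet {p : Q // p ∉ R} T :=
  ⟨fun p t => N.pre p.1 t, fun t p => N.post t p.1⟩

/-- A marked graph: ordinary, and every place has exactly one input and one output
transition. -/
def isMarkedGraph {P : Type} [Fintype T] (N : PetriNet P T) : Prop :=
  N.ordinary ∧ ∀ p, (N.placePre p).card = 1 ∧ (N.placePost p).card = 1

/-- An elementary directed path from node `x` to node `y`. -/
def elemPath {P : Type} (N : PetriNet P T) (x y : P ⊕ T) : Prop :=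
  ∃ l : List (P ⊕ T), l.Chain' N.arc ∧ l.head? = some x ∧ l.getLast? = some y ∧ l.Nodup

/-- An elementary directed path from `x` to `y`, none of whose places is marked by `M`. -/
def elemPathUnmarked {P : Type} (N : PetriNet P T) (M : P → ℕ) (x y : P ⊕ T) : Prop :=
  ∃ l : List (P ⊕ T), l.Chain' N.arc ∧ l.head? = some x ∧ l.getLast? = some y ∧ l.Nodup ∧
    ∀ p : P, Sum.inl p ∈ l → M p = 0

/-- `l` lists the nodes (each exactly once) of an elementary circuit. -/
def isElemCircuit {P : Type} (N : PetriNet P T) : List (P ⊕ T) → Prop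
  | [] => False
  | x :: xs => (x :: xs).Nodup ∧ List.Chain N.arc x (xs ++ [x])

/-- Augmented marked graph with resource places `R`. -/
def isAMG [Fintype Q] [Fintype T] (N : PetriNet Q T) (M0 : Q → ℕ) (R : Finset Q) : Prop :=
  -- ordinary net
  N.ordinary ∧
  -- (H1) removing the resource places yields a marked graph
  isMarkedGraph (N.delPlaces R) ∧
  -- (H2) and paths of (H4)
  (∀ r ∈ R, ∃ D : Finset (T × T),
    2 ≤ D.card ∧
    Set.InjOn Prod.fst (↑D : Set (T × T)) ∧
    Set.InjOn Prod.snd (↑D : Set (T × T)) ∧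
    (∀ t : T, 0 < N.pre r t ↔ ∃ ab ∈ D, ab.1 = t) ∧
    (∀ t : T, 0 < N.post t r ↔ ∃ ab ∈ D, ab.2 = t) ∧
    (∀ ab ∈ D, ab.1 ≠ ab.2 →
      elemPath (N.delPlaces R) (Sum.inr ab.1) (Sum.inr ab.2)) ∧
    (∀ ab ∈ D, ab.1 ≠ ab.2 →
      elemPathUnmarked (N.delPlaces R) (fun p => M0 p.1) (Sum.inr ab.1) (Sum.inr ab.2))) ∧
  -- (H3) each elementary circuit of the underlying marked graph is marked
  (∀ l : List ({p : Q // p ∉ R} ⊕ T), isElemCircuit (N.delPlaces R) l →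
    ∃ p : {p : Q // p ∉ R}, Sum.inl p ∈ l ∧ 0 < M0 p.1) ∧
  -- (H4) each resource place is initially marked
  (∀ r ∈ R, 0 < M0 r)

end PetriNet

/-!
In an AMG every place has as many input as output transitions, so the all-ones vector is a
T-invariant: from `M = M0 + I·Y` we get `M0 = M + I·Z` with `Z ≥ 0`. Firing transitions of the
support of `Z` one at a time realises this. If none of them is enabled, their empty input
places, together with the places of the unmarked paths of (H4) that lead into transitions
outside the support, form a siphon that is empty at `M`; some transition is then dead at the
potentially reachable marking `M`, against strong liveness. Hence every potentially reachable
marking reaches `M0`.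
-/

open Finset

namespace List.IsChain

variable {α : Type*} {r : α → α → Prop} {l : List α}

theorem head?_eq_or_exists_rel (h : l.IsChain r) {x : α} (hx : x ∈ l) :
    l.head? = some x ∨ ∃ y ∈ l, r y x :=
  (List.IsChain.iff_mem.mp h).induction (fun x => l.head? = some x ∨ ∃ y ∈ l, r y x) l
    (fun _ _ hyx _ => Or.inr ⟨_, hyx.1, hyx.2.2⟩) (fun hl => Or.inl (head?_eq_some_head hl)) x hx

end List.IsChain

namespace PetriNet

variable {P T : Type}

section StateEquation

variable [Fintype T] {N : PetriNet P T} {M M' M'' : P → ℕ} {Y Y' : T → ℕ}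

variable (N) in
def StateEq (M : P → ℕ) (Y : T → ℕ) (M' : P → ℕ) : Prop :=
  ∀ p, (M' p : ℤ) = M p + ∑ t, N.inc p t * Y t

theorem eq_of_stateEq_zero (h : N.StateEq M 0 M') : M' = M :=
  funext fun p => by simpa using h p

theorem StateEq.trans (h : N.StateEq M Y M') (h' : N.StateEq M' Y' M'') :
    N.StateEq M (Y + Y') M'' := by
  intro p
  simp only [Pi.add_apply, Nat.cast_add, mul_add, sum_add_distrib]
  rw [h' p, h p]
  ring

theorem StateEq.of_add_left (h : N.StateEq M (Y + Y') M'') (h' : N.StateEq M Y M') :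
    N.StateEq M' Y' M'' := by
  intro p
  have hp := h p
  simp only [Pi.add_apply, Nat.cast_add, mul_add, sum_add_distrib] at hp
  linarith [h' p]

theorem stateEq_fire {t : T} (ht : N.enabled M t) :
    N.StateEq M (Pi.single t 1) (N.fire M t) := by
  intro p
  have hpt := ht p
  simp only [fire, inc, Pi.single_apply, Nat.cast_ite, Nat.cast_one, Nat.cast_zero, mul_ite,
    mul_one, mul_zero, sum_ite_eq', mem_univ, if_true]
  push_cast [hpt]
  ring

/-- With the all-ones vector a T-invariant, `I·Y` is undone by `I·(c - Y)` for `c = ∑ Y`. -/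
theorem StateEq.reverse (hinv : ∀ p, ∑ t, N.inc p t = 0) (h : N.StateEq M Y M') :
    N.StateEq M' (fun t => ∑ t', Y t' - Y t) M := by
  intro p
  have hcast : ∀ t, ((∑ t', Y t' - Y t : ℕ) : ℤ) = ((∑ t', Y t' : ℕ) : ℤ) - Y t := fun t =>
    Nat.cast_sub (single_le_sum (fun _ _ => Nat.zero_le _) (mem_univ t))
  simp only [hcast, mul_sub, sum_sub_distrib, ← sum_mul, hinv p, zero_mul, h p]
  ring

end StateEquation

section Siphon

variable {N : PetriNet P T} {S : Set P} {M : P → ℕ}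

variable (N) in
def IsSiphon (S : Set P) : Prop :=
  ∀ s ∈ S, ∀ t, 0 < N.post t s → ∃ s' ∈ S, 0 < N.pre s' t

theorem IsSiphon.eq_zero_of_feasible (hS : N.IsSiphon S) {σ : List T} :
    ∀ {M M' : P → ℕ}, (∀ s ∈ S, M s = 0) → N.feasible M σ M' → ∀ s ∈ S, M' s = 0 := by
  induction σ with
  | nil => rintro M M' hM rfl; exact hM
  | cons t σ ih =>
    rintro M M' hM ⟨ht, hσ⟩
    refine ih (fun s hs => ?_) hσ
    have hpost : N.post t s = 0 := by
      by_contra hpos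
      obtain ⟨s', hs', hpre⟩ := hS s hs t (Nat.pos_of_ne_zero hpos)
      have := ht s'
      rw [hM s' hs'] at this
      omega
    simp [fire, hM s hs, hpost]

theorem IsSiphon.not_live (hS : N.IsSiphon S) (hM : ∀ s ∈ S, M s = 0) {s : P} {t : T}
    (hs : s ∈ S) (ht : 0 < N.pre s t) : ¬ N.live M := by
  intro hlive
  obtain ⟨M', ⟨σ, hσ⟩, hen⟩ := hlive t M ⟨[], rfl⟩
  have := hen s
  rw [hS.eq_zero_of_feasible hM hσ s hs] at this
  omega

end Siphon

section Ordinary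

variable {N : PetriNet P T}

theorem exists_pre_pos_of_not_enabled (hN : N.ordinary) {M : P → ℕ} {t : T}
    (h : ¬ N.enabled M t) : ∃ p, M p = 0 ∧ 0 < N.pre p t := by
  simp only [enabled, not_forall, not_le] at h
  obtain ⟨p, hp⟩ := h
  have := (hN p t).1
  exact ⟨p, by omega, by omega⟩

theorem sum_inc_mul_of_ordinary [Fintype T] (hN : N.ordinary) (p : P) (Z : T → ℕ) :
    ∑ t, N.inc p t * Z t =
      ∑ t ∈ N.placePre p, (Z t : ℤ) - ∑ t ∈ N.placePost p, (Z t : ℤ) := by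
  have h01 : ∀ n : ℕ, n ≤ 1 → ∀ z : ℤ, (n : ℤ) * z = if 0 < n then z else 0 := by
    intro n hn z
    interval_cases n <;> simp
  simp only [inc, sub_mul, sum_sub_distrib, placePre, placePost, sum_filter,
    h01 _ (hN p _).1, h01 _ (hN p _).2]

end Ordinary

section MarkedGraph

variable [Fintype T] {G : PetriNet P T} {p : P} {u v : T}

theorem isMarkedGraph.placePre_eq (hG : G.isMarkedGraph) (hu : 0 < G.post u p) :
    G.placePre p = {u} := by
  obtain ⟨u', hu'⟩ := card_eq_one.mp (hG.2 p).1
  have hmem : u ∈ G.placePre p := by simpa [placePre]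
  rw [hu'] at hmem ⊢
  rw [mem_singleton.mp hmem]

theorem isMarkedGraph.placePost_eq (hG : G.isMarkedGraph) (hv : 0 < G.pre p v) :
    G.placePost p = {v} := by
  obtain ⟨v', hv'⟩ := card_eq_one.mp (hG.2 p).2
  have hmem : v ∈ G.placePost p := by simpa [placePost]
  rw [hv'] at hmem ⊢
  rw [mem_singleton.mp hmem]

theorem isMarkedGraph.eq_of_post_pos (hG : G.isMarkedGraph) (hu : 0 < G.post u p) {u' : T}
    (hu' : 0 < G.post u' p) : u' = u := by
  have hmem : u' ∈ G.placePre p := by simpa [placePre]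
  rwa [hG.placePre_eq hu, mem_singleton] at hmem

theorem isMarkedGraph.eq_of_pre_pos (hG : G.isMarkedGraph) (hv : 0 < G.pre p v) {v' : T}
    (hv' : 0 < G.pre p v') : v' = v := by
  have hmem : v' ∈ G.placePost p := by simpa [placePost]
  rwa [hG.placePost_eq hv, mem_singleton] at hmem

theorem isMarkedGraph.exists_post_pos (hG : G.isMarkedGraph) (p : P) : ∃ u, 0 < G.post u p := by
  obtain ⟨u, hu⟩ := card_pos.mp (hG.2 p).1.ge
  exact ⟨u, by simpa [placePre] using hu⟩

theorem isMarkedGraph.exists_pre_pos (hG : G.isMarkedGraph) (p : P) : ∃ v, 0 < G.pre p v := by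
  obtain ⟨v, hv⟩ := card_pos.mp (hG.2 p).2.ge
  exact ⟨v, by simpa [placePost] using hv⟩

theorem isMarkedGraph.stateEq_apply (hG : G.isMarkedGraph) {M M' : P → ℕ} {Z : T → ℕ}
    (h : G.StateEq M Z M') (hu : 0 < G.post u p) (hv : 0 < G.pre p v) :
    (M' p : ℤ) = M p + Z u - Z v := by
  rw [h p, sum_inc_mul_of_ordinary hG.1, hG.placePre_eq hu, hG.placePost_eq hv, sum_singleton,
    sum_singleton, add_sub_assoc]

end MarkedGraph

section Paths

variable {G : PetriNet P T} {M : P → ℕ} {L : List (P ⊕ T)} {a b : T}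

variable (G) in
def UnmarkedPath (M : P → ℕ) (L : List (P ⊕ T)) (a b : T) : Prop :=
  L.IsChain G.arc ∧ L.head? = some (.inr a) ∧ L.getLast? = some (.inr b) ∧
    ∀ q, .inl q ∈ L → M q = 0

theorem UnmarkedPath.eq_or_exists_pre_of_mem (hL : G.UnmarkedPath M L a b) {t : T}
    (ht : .inr t ∈ L) : t = a ∨ ∃ q, .inl q ∈ L ∧ 0 < G.pre q t := by
  rcases hL.1.head?_eq_or_exists_rel ht with h | ⟨y | y, hy, hyt⟩
  · rw [hL.2.1] at h
    exact Or.inl (by simpa using h.symm)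
  · exact Or.inr ⟨y, hy, hyt⟩
  · exact hyt.elim

theorem UnmarkedPath.eq_or_exists_pre_of_post_pos [Fintype T] (hG : G.isMarkedGraph)
    (hL : G.UnmarkedPath M L a b) {q : P} (hq : .inl q ∈ L) {u : T} (hu : 0 < G.post u q) :
    u = a ∨ ∃ q', .inl q' ∈ L ∧ 0 < G.pre q' u := by
  rcases hL.1.head?_eq_or_exists_rel hq with h | ⟨y | u', hy, hyq⟩
  · rw [hL.2.1] at h
    simp at h
  · exact hyq.elim
  · rw [hG.eq_of_post_pos hyq hu]
    exact hL.eq_or_exists_pre_of_mem hy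

/-- Backwards along the path, the marking equation `M' = M + I·Z` forces `Z` to vanish on the
transitions and `M` on the places, since their `M'`-marking is zero. -/
theorem UnmarkedPath.eq_zero [Fintype T] (hG : G.isMarkedGraph) {M M' : P → ℕ} {Z : T → ℕ}
    (hZ : G.StateEq M Z M') (hL : G.UnmarkedPath M' L a b) (hb : Z b = 0) {q : P}
    (hq : .inl q ∈ L) : M q = 0 := by
  have hzero : ∀ x ∈ L, Sum.elim (fun q => ∀ v, 0 < G.pre q v → Z v = 0) (fun t => Z t = 0) x :=
    (List.IsChain.iff_mem.mp hL.1).backwards_induction _ L ?_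
      fun hne => by
        rw [Option.some_injective _ ((List.getLast?_eq_some_getLast hne).symm.trans hL.2.2.1)]
        exact hb
  · obtain ⟨u, hu⟩ := hG.exists_post_pos q
    obtain ⟨v, hv⟩ := hG.exists_pre_pos q
    have hbal := hG.stateEq_apply hZ hu hv
    rw [hL.2.2.2 q hq, hzero _ hq v hv] at hbal
    omega
  · rintro (q | u) (q' | v) ⟨-, hy, hxy⟩ hzy <;> try exact hxy.elim
    · exact fun v' hv' => hG.eq_of_pre_pos hxy hv' ▸ hzy
    · obtain ⟨v, hv⟩ := hG.exists_pre_pos q'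
      have hbal := hG.stateEq_apply hZ hxy hv
      rw [hL.2.2.2 q' hy, hzy v hv] at hbal
      simp only [Sum.elim_inr]
      omega

end Paths

section AugmentedMarkedGraph

variable {Q T : Type} [Fintype T] {N : PetriNet Q T} {M M0 : Q → ℕ} {R : Finset Q} {Z : T → ℕ}

variable (N) in
def blockedPlaces (M : Q → ℕ) (Z : T → ℕ) : Set Q :=
  {p | M p = 0 ∧ ∃ t, 0 < Z t ∧ 0 < N.pre p t}

variable (N) in
/-- The blocked places, closed under the unmarked paths of (H4) that leave an output transition
of a blocked place towards a transition outside the support of `Z`. -/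
def blockingSiphon (R : Finset Q) (M M0 : Q → ℕ) (Z : T → ℕ) : Set Q :=
  N.blockedPlaces M Z ∪
    {q | ∃ r ∈ N.blockedPlaces M Z, ∃ a b L, 0 < N.pre r a ∧ Z b = 0 ∧
      (N.delPlaces R).UnmarkedPath (fun p => M0 p.1) L a b ∧ ∃ hq : q ∉ R, .inl ⟨q, hq⟩ ∈ L}

theorem blockingSiphon_eq_zero (hMG : (N.delPlaces R).isMarkedGraph) (hZ : N.StateEq M Z M0) :
    ∀ s ∈ N.blockingSiphon R M M0 Z, M s = 0 := by
  rintro s (⟨hs, -⟩ | ⟨r, -, a, b, L, -, hb, hL, _, hsL⟩)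
  · exact hs
  · exact hL.eq_zero hMG (fun p => hZ p.1) hb hsL

variable [Fintype Q]

theorem isAMG.card_placePre_eq (h : N.isAMG M0 R) (p : Q) :
    #(N.placePre p) = #(N.placePost p) := by
  by_cases hp : p ∈ R
  · obtain ⟨D, -, hfst, hsnd, hpre, hpost, -⟩ := h.2.2.1 p hp
    have hin : N.placePre p = D.image Prod.snd := by ext t; simp [placePre, hpost t]
    have hout : N.placePost p = D.image Prod.fst := by ext t; simp [placePost, hpre t]
    rw [hin, hout, card_image_of_injOn hsnd, card_image_of_injOn hfst]
  · exact (h.2.1.2 ⟨p, hp⟩).1.trans (h.2.1.2 ⟨p, hp⟩).2.symm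

theorem isAMG.sum_inc_eq_zero (h : N.isAMG M0 R) (p : Q) : ∑ t, N.inc p t = 0 := by
  simpa [h.card_placePre_eq p] using sum_inc_mul_of_ordinary h.1 p 1

/-- (H4) supplies the path only for `a ≠ b`; for `a = b` the one-node path `[a]` serves. -/
theorem isAMG.exists_unmarkedPath (h : N.isAMG M0 R) {r : Q} (hr : r ∈ R) {u : T}
    (hu : 0 < N.post u r) :
    ∃ a, 0 < N.pre r a ∧ ∃ L, (N.delPlaces R).UnmarkedPath (fun p => M0 p.1) L a u := by
  obtain ⟨D, -, -, -, hpre, hpost, -, hpaths⟩ := h.2.2.1 r hr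
  obtain ⟨ab, hab, rfl⟩ := (hpost u).mp hu
  refine ⟨ab.1, (hpre _).mpr ⟨ab, hab, rfl⟩, ?_⟩
  by_cases hne : ab.1 = ab.2
  · exact ⟨[.inr ab.1], .singleton _, rfl, by simp [hne], by simp⟩
  · obtain ⟨L, hchain, hhead, hlast, -, hunmarked⟩ := hpaths ab hab hne
    exact ⟨L, hchain, hhead, hlast, hunmarked⟩

theorem isSiphon_blockingSiphon (h : N.isAMG M0 R) (hZ : N.StateEq M Z M0)
    (hblk : ∀ t, 0 < Z t → ¬ N.enabled M t) : N.IsSiphon (N.blockingSiphon R M M0 Z) := by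
  have hblocked : ∀ t, 0 < Z t → ∃ p ∈ N.blockingSiphon R M M0 Z, 0 < N.pre p t := by
    intro t ht
    obtain ⟨p, hp, hpt⟩ := exists_pre_pos_of_not_enabled h.1 (hblk t ht)
    exact ⟨p, Or.inl ⟨hp, t, ht, hpt⟩, hpt⟩
  rintro s (⟨hs, t, ht, hst⟩ | ⟨r, hr, a, b, L, hra, hb, hL, _, hsL⟩) u hu
  · by_cases hsR : s ∈ R
    · obtain ⟨a, hsa, L, hL⟩ := h.exists_unmarkedPath hsR hu
      rcases Nat.eq_zero_or_pos (Z u) with hu0 | hu0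
      · rcases hL.eq_or_exists_pre_of_mem (List.mem_of_getLast? hL.2.2.1) with rfl | ⟨q, hq, hqu⟩
        · exact ⟨s, Or.inl ⟨hs, t, ht, hst⟩, hsa⟩
        · exact ⟨q.1, Or.inr ⟨s, ⟨hs, t, ht, hst⟩, a, u, L, hsa, hu0, hL, q.2, hq⟩, hqu⟩
      · exact hblocked u hu0
    · have hbal := h.2.1.stateEq_apply (p := ⟨s, hsR⟩) (fun p => hZ p.1)
        (show 0 < (N.delPlaces R).post u ⟨s, hsR⟩ from hu)
        (show 0 < (N.delPlaces R).pre ⟨s, hsR⟩ t from hst)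
      exact hblocked u (by simp only [hs] at hbal; omega)
  · rcases hL.eq_or_exists_pre_of_post_pos h.2.1 hsL hu with rfl | ⟨q, hq, hqu⟩
    · exact ⟨r, Or.inl hr, hra⟩
    · exact ⟨q.1, Or.inr ⟨r, hr, a, b, L, hra, hb, hL, q.2, hq⟩, hqu⟩

theorem exists_enabled_of_stateEq (h : N.isAMG M0 R) (hlive : N.live M)
    (hZ : N.StateEq M Z M0) (hZ0 : Z ≠ 0) : ∃ t, 0 < Z t ∧ N.enabled M t := by
  by_contra! hblk
  obtain ⟨t, ht⟩ : ∃ t, 0 < Z t := by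
    simpa [Function.ne_iff, Nat.pos_iff_ne_zero] using hZ0
  obtain ⟨p, hp, hpt⟩ := exists_pre_pos_of_not_enabled h.1 (hblk t ht)
  exact (isSiphon_blockingSiphon h hZ hblk).not_live (blockingSiphon_eq_zero h.2.1 hZ)
    (Or.inl ⟨hp, t, ht, hpt⟩) hpt hlive

theorem reachable_of_stateEq (h : N.isAMG M0 R) (hSL : ∀ M, N.potReach M0 M → N.live M)
    (hM : N.potReach M0 M) (hZ : N.StateEq M Z M0) : N.reachable M M0 := by
  induction hn : ∑ t, Z t using Nat.strong_induction_on generalizing M Z with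
  | _ n ih =>
  by_cases hZ0 : Z = 0
  · subst hZ0
    exact ⟨[], eq_of_stateEq_zero hZ⟩
  obtain ⟨t, ht, hen⟩ := exists_enabled_of_stateEq h (hSL M hM) hZ hZ0
  have hsplit : Pi.single t 1 + (Z - Pi.single t 1) = Z := by
    funext t'
    by_cases ht' : t' = t
    · subst ht'
      simp only [Pi.add_apply, Pi.sub_apply, Pi.single_eq_same]
      omega
    · simp [ht']
  have hlt : ∑ t', (Z - Pi.single t 1 : T → ℕ) t' < n := by
    rw [← hn, ← hsplit]
    simp [sum_add_distrib]
  have hfire := stateEq_fire hen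
  obtain ⟨Y, hY⟩ := hM
  obtain ⟨σ, hσ⟩ := ih _ hlt ⟨Y + Pi.single t 1, StateEq.trans hY hfire⟩
    ((hsplit ▸ hZ).of_add_left hfire) rfl
  exact ⟨t :: σ, hen, hσ⟩

end AugmentedMarkedGraph

end PetriNet

/-- If an AMG is strongly live, then its potential reachability graph is directed. -/
theorem stmt11 {Q T : Type} [Fintype Q] [Fintype T]
    (N : PetriNet Q T) (M0 : Q → ℕ) (R : Finset Q)
    (hAMG : N.isAMG M0 R)
    (hSL : ∀ M : Q → ℕ, N.potReach M0 M → N.live M) :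
    ∀ M1 M2 : Q → ℕ, N.potReach M0 M1 → N.potReach M0 M2 →
      ∃ M : Q → ℕ, N.reachable M1 M ∧ N.reachable M2 M := by
  have hback : ∀ M, N.potReach M0 M → N.reachable M M0 := fun M ⟨Y, hY⟩ =>
    PetriNet.reachable_of_stateEq hAMG hSL ⟨Y, hY⟩
      (PetriNet.StateEq.reverse hAMG.sum_inc_eq_zero hY)
  exact fun M1 M2 h1 h2 => ⟨M0, hback M1 h1, hback M2 h2⟩
end
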